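/- arXiv:math/0403157 — 2 statements merged into one kernel-verified Lean document; each statement's English description precedes it below -/
import Mathlib

section
/- Assume K is algebraically closed. Then the monic degree-10 polynomial P(Y) = −20⁵ · f⁺(Y²/20, Y) has 10 distinct roots in K, and for each root y₀, exactly 5 of the other roots y satisfy ‖y − y₀‖¹⁰ = 5⁻⁷ and exactly 4 satisfy ‖y − y₀‖¹⁰ = 5⁻⁸ (valuations 7/10 and 8/10, respectively). -/
/-- The defining polynomial of the plane model of `X₀(125)⁺`. -/
def fplus {K : Type*} [Field K] (x y : K) : K :=
  y ^ 4 - x ^ 5 + 5 * x * y ^ 3 + 15 * x ^ 2 * y ^ 2 + 25 * x ^ 3 * y + 25 * x ^ 4 +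
    5 * y ^ 3 + 5 * x * y ^ 2 - 25 * x ^ 3 + 15 * y ^ 2 + 25 * x ^ 2 + 25 * y - 25 * x + 25

/-!
Write `w = -log₅ v` for the valuation. The Newton polygon of `P` is the single segment from
`(0, 7)` to `(10, 0)`, so every root has valuation `7/10`. At a root `y₀` expand
`P(y₀ + Z) = ∑ bₖ Zᵏ`: one has `w(b₁) = 67/10`, `w(b₅) = 7/2` and
`w(bₖ) ≥ max(15/2 - 4k/5, 7 - 7k/10)`, so the Newton polygon of `P(y₀ + Z)/Z` consists of a
segment of slope `-4/5` and length 4 followed by one of slope `-7/10` and length 5. Hence every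
other root `y` has `w(y - y₀) ∈ {7/10, 4/5}`. Since `b₁ = P'(y₀) = ∏ (y₀ - y)` is nonzero, the
roots are simple, and the nine valuations add up to `67/10`, which forces five of them to be
`7/10` and four to be `4/5`.
-/

open Polynomial Finset

section Nonarchimedean

variable {K : Type*} [Field K] {v : AbsoluteValue K ℝ}

theorem abv_sum_le_of_forall_le (hv : IsNonarchimedean v) {ι : Type*} {s : Finset ι} {f : ι → K}
    {c : ℝ} (hc : 0 ≤ c) (h : ∀ i ∈ s, v (f i) ≤ c) : v (∑ i ∈ s, f i) ≤ c := by
  classical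
  induction s using Finset.induction_on with
  | empty => simpa using hc
  | insert i s hi ih =>
    rw [sum_insert hi]
    exact (hv _ _).trans (max_le (h i (mem_insert_self i s))
      (ih fun j hj => h j (mem_insert_of_mem hj)))

theorem sum_ne_zero_of_abv_lt (hv : IsNonarchimedean v) {ι : Type*} {s : Finset ι}
    {f : ι → K} {j : ι} (hj : j ∈ s) (hfj : f j ≠ 0) (h : ∀ i ∈ s, i ≠ j → v (f i) < v (f j)) :
    ∑ i ∈ s, f i ≠ 0 := by
  rw [← v.ne_zero_iff, hv.apply_sum_eq_of_lt (fun a => (v.map_neg a).symm) hj h]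
  exact v.ne_zero hfj

theorem exists_abv_eq_rpow {b : ℝ} (hb : 1 < b) {x : K} (hx : x ≠ 0) :
    ∃ σ : ℝ, v x = b ^ (-σ) :=
  ⟨-Real.logb b (v x), by rw [neg_neg, Real.rpow_logb (by linarith) hb.ne' (v.pos hx)]⟩

theorem abv_mul_pow_le_rpow {b : ℝ} (hb : 0 < b) {c x : K} {e σ : ℝ} (hc : v c ≤ b ^ (-e))
    (hx : v x = b ^ (-σ)) (d : ℕ) : v (c * x ^ d) ≤ b ^ (-(e + d * σ)) := by
  rw [map_mul, map_pow, hx, ← Real.rpow_mul_natCast hb.le, neg_add, Real.rpow_add hb,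
    mul_comm (d : ℝ) σ, ← neg_mul]
  exact mul_le_mul_of_nonneg_right hc (by positivity)

theorem abv_mul_pow_eq_rpow {b : ℝ} (hb : 0 < b) {c x : K} {e σ : ℝ} (hc : v c = b ^ (-e))
    (hx : v x = b ^ (-σ)) (d : ℕ) : v (c * x ^ d) = b ^ (-(e + d * σ)) := by
  rw [map_mul, map_pow, hx, hc, ← Real.rpow_mul_natCast hb.le, neg_add, Real.rpow_add hb,
    mul_comm (d : ℝ) σ, ← neg_mul]

/-- Roots of `∑ cⱼ Xʲ` when its Newton polygon is the single segment from `(0, A)` to `(n, 0)`. -/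
theorem abv_eq_rpow_of_sum_eq_zero (hv : IsNonarchimedean v) {b : ℝ} (hb : 1 < b) {n : ℕ}
    (hn : 0 < n) {c : ℕ → K} {A : ℝ} (h0 : v (c 0) = b ^ (-A)) (hcn : v (c n) = 1)
    (hc : ∀ j ∈ range (n + 1), v (c j) ≤ b ^ (-(A * (n - j) / n))) {x : K}
    (hx : ∑ j ∈ range (n + 1), c j * x ^ j = 0) : v x = b ^ (-(A / n)) := by
  have hb0 : 0 < b := by linarith
  have hn' : (0 : ℝ) < n := by exact_mod_cast hn
  have hx0 : x ≠ 0 := by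
    rintro rfl
    rw [sum_range_succ', sum_eq_zero fun j _ => by simp, zero_add, pow_zero, mul_one] at hx
    exact (Real.rpow_pos_of_pos hb0 (-A)).ne' (h0 ▸ hx ▸ v.map_zero)
  obtain ⟨σ, hσ⟩ := exists_abv_eq_rpow hb hx0
  have hterm (j : ℕ) (hj : j ∈ range (n + 1)) :
      v (c j * x ^ j) ≤ b ^ (-(A * (n - j) / n + j * σ)) :=
    abv_mul_pow_le_rpow hb0 (hc j hj) hσ j
  rcases lt_trichotomy σ (A / n) with hlt | heq | hgt
  · refine absurd hx (sum_ne_zero_of_abv_lt hv (self_mem_range_succ n) ?_ fun j hj hjn => ?_)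
    · exact mul_ne_zero (v.ne_zero_iff.mp (by simp [hcn])) (pow_ne_zero n hx0)
    rw [abv_mul_pow_eq_rpow (e := 0) hb0 (by rw [hcn, neg_zero, Real.rpow_zero]) hσ n]
    refine (hterm j hj).trans_lt ((Real.rpow_lt_rpow_left_iff hb).mpr (neg_lt_neg ?_))
    have hjn' : (j : ℝ) < n := by exact_mod_cast lt_of_le_of_ne (mem_range_succ_iff.mp hj) hjn
    rw [lt_div_iff₀ hn'] at hlt
    field_simp
    nlinarith
  · rw [hσ, heq]
  · refine absurd hx (sum_ne_zero_of_abv_lt hv (mem_range.mpr n.succ_pos) ?_ fun j hj hj0 => ?_)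
    · simpa using v.ne_zero_iff.mp (by rw [h0]; positivity)
    rw [pow_zero, mul_one, h0]
    refine (hterm j hj).trans_lt ((Real.rpow_lt_rpow_left_iff hb).mpr (neg_lt_neg ?_))
    have hj' : (0 : ℝ) < j := by exact_mod_cast Nat.pos_of_ne_zero hj0
    rw [div_lt_iff₀ hn'] at hgt
    field_simp
    nlinarith

end Nonarchimedean

section PAdic

variable {K : Type*} [Field K] {v : AbsoluteValue K ℝ} {p : ℕ}

theorem abv_intCast_eq_padicNorm (hQ : ∀ q : ℚ, v (q : K) = (padicNorm p q : ℝ)) (c : ℤ) :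
    v (c : K) = padicNorm p c := by
  simpa using hQ c

theorem abv_intCast_prime_pow_mul [Fact p.Prime] (hQ : ∀ q : ℚ, v (q : K) = (padicNorm p q : ℝ))
    (m : ℕ) (u : ℤ) : v (((p : ℤ) ^ m * u : ℤ) : K) = (p : ℝ) ^ (-(m : ℝ)) * padicNorm p u := by
  have hp : v (p : K) = (p : ℝ)⁻¹ := by
    simpa [padicNorm.padicNorm_p_of_prime] using hQ p
  rw [Int.cast_mul, map_mul, Int.cast_pow, map_pow, Int.cast_natCast, hp,
    abv_intCast_eq_padicNorm hQ, Real.rpow_neg (Nat.cast_nonneg p), Real.rpow_natCast, inv_pow]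

theorem abv_intCast_le [Fact p.Prime] (hQ : ∀ q : ℚ, v (q : K) = (padicNorm p q : ℝ)) {c : ℤ}
    {m : ℕ} (h : (p : ℤ) ^ m ∣ c) : v (c : K) ≤ (p : ℝ) ^ (-(m : ℝ)) := by
  obtain ⟨u, rfl⟩ := h
  rw [abv_intCast_prime_pow_mul hQ]
  exact mul_le_of_le_one_right (by positivity) (by exact_mod_cast padicNorm.of_int u)

theorem abv_intCast_eq [Fact p.Prime] (hQ : ∀ q : ℚ, v (q : K) = (padicNorm p q : ℝ)) {c : ℤ}
    {m : ℕ} (h : (p : ℤ) ^ m ∣ c) (h' : ¬ (p : ℤ) ^ (m + 1) ∣ c) :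
    v (c : K) = (p : ℝ) ^ (-(m : ℝ)) := by
  obtain ⟨u, rfl⟩ := h
  have hu : ¬ (p : ℤ) ∣ u := fun hu => h' (pow_succ (p : ℤ) m ▸ mul_dvd_mul_left _ hu)
  rw [abv_intCast_prime_pow_mul hQ, (padicNorm.int_eq_one_iff u).mpr hu, Rat.cast_one, mul_one]

variable [Fact p.Prime] {x : K} {σ : ℝ} {ι : Type*} {s : Finset ι} {c : ι → ℤ} {d : ι → ℕ}

theorem abv_sum_intCast_mul_pow_le (hv : IsNonarchimedean v)
    (hQ : ∀ q : ℚ, v (q : K) = (padicNorm p q : ℝ)) (hx : v x = p ^ (-σ)) {B : ℝ}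
    (h : ∀ i ∈ s, ∃ m : ℕ, (p : ℤ) ^ m ∣ c i ∧ B ≤ m + d i * σ) :
    v (∑ i ∈ s, (c i : K) * x ^ d i) ≤ (p : ℝ) ^ (-B) := by
  have hp : (1 : ℝ) < p := by exact_mod_cast (Fact.out : p.Prime).one_lt
  refine abv_sum_le_of_forall_le hv (by positivity) fun i hi => ?_
  obtain ⟨m, hm, hB⟩ := h i hi
  exact (abv_mul_pow_le_rpow (by positivity) (abv_intCast_le hQ hm) hx (d i)).trans
    ((Real.rpow_le_rpow_left_iff hp).mpr (neg_le_neg hB))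

theorem abv_sum_intCast_mul_pow_eq (hv : IsNonarchimedean v)
    (hQ : ∀ q : ℚ, v (q : K) = (padicNorm p q : ℝ)) (hx : v x = p ^ (-σ)) {j : ι} (hj : j ∈ s)
    {m : ℕ} (hm : (p : ℤ) ^ m ∣ c j) (hm' : ¬ (p : ℤ) ^ (m + 1) ∣ c j)
    (h : ∀ i ∈ s, i ≠ j → ∃ m' : ℕ, (p : ℤ) ^ m' ∣ c i ∧ m + d j * σ < m' + d i * σ) :
    v (∑ i ∈ s, (c i : K) * x ^ d i) = (p : ℝ) ^ (-(m + d j * σ)) := by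
  have hp : (1 : ℝ) < p := by exact_mod_cast (Fact.out : p.Prime).one_lt
  have hj_eq := abv_mul_pow_eq_rpow (by positivity) (abv_intCast_eq hQ hm hm') hx (d j)
  rw [hv.apply_sum_eq_of_lt (fun a => (v.map_neg a).symm) hj fun i hi hij => ?_, hj_eq]
  obtain ⟨m', hm'', hlt⟩ := h i hi hij
  exact hj_eq ▸ (abv_mul_pow_le_rpow (by positivity) (abv_intCast_le hQ hm'') hx (d i)).trans_lt
    ((Real.rpow_lt_rpow_left_iff hp).mpr (neg_lt_neg hlt))

end PAdic

theorem card_filter_of_prod_eq_rpow {α : Type*} {T : Finset α} {g : α → ℝ} {b a₁ a₂ c : ℝ}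
    (hb : 1 < b) (ha : a₁ ≠ a₂) (hg : ∀ y ∈ T, g y = b ^ (-a₁) ∨ g y = b ^ (-a₂))
    (hprod : ∏ y ∈ T, g y = b ^ (-c)) :
    a₁ * #{y ∈ T | g y = b ^ (-a₁)} + a₂ * #{y ∈ T | g y = b ^ (-a₂)} = c ∧
      #{y ∈ T | g y = b ^ (-a₁)} + #{y ∈ T | g y = b ^ (-a₂)} = #T := by
  classical
  have hinj {x y : ℝ} : b ^ x = b ^ y ↔ x = y := Real.rpow_right_inj (by linarith) hb.ne'
  have hne : b ^ (-a₁) ≠ b ^ (-a₂) := by rwa [Ne, hinj, neg_inj]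
  have hB : T.filter (fun y => ¬ g y = b ^ (-a₁)) = T.filter (fun y => g y = b ^ (-a₂)) :=
    filter_congr fun y hy => ⟨(hg y hy).resolve_left, fun h h' => hne (h'.symm.trans h)⟩
  have hpow (a : ℝ) :
      ∏ y ∈ T with g y = b ^ (-a), g y = b ^ (-(a * #{y ∈ T | g y = b ^ (-a)})) := by
    rw [prod_congr rfl fun y hy => (mem_filter.mp hy).2, prod_const,
      ← Real.rpow_mul_natCast (by linarith), neg_mul]
  refine ⟨?_, hB ▸ card_filter_add_card_filter_not _⟩
  rw [← prod_filter_mul_prod_filter_not T (fun y => g y = b ^ (-a₁)), hB, hpow, hpow,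
    ← Real.rpow_add (by linarith)] at hprod
  rwa [hinj, ← neg_add, neg_inj] at hprod

theorem pow_eq_inv_pow_iff_eq_rpow {b u : ℝ} (hb : 0 < b) (hu : 0 ≤ u) {n : ℕ} (hn : n ≠ 0)
    (m : ℕ) : u ^ n = b⁻¹ ^ m ↔ u = b ^ (-(m / n : ℝ)) := by
  have h : (b ^ (-(m / n : ℝ))) ^ n = b⁻¹ ^ m := by
    rw [← Real.rpow_mul_natCast hb.le, neg_mul, div_mul_cancel₀ _ (by exact_mod_cast hn),
      Real.rpow_neg hb.le, Real.rpow_natCast, inv_pow]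
  rw [← h, pow_left_inj₀ hu (by positivity) hn]

section RamificationPoly

instance : Fact (Nat.Prime 5) := ⟨Nat.prime_five⟩

def ramificationCoeff : ℕ → ℤ
  | 0 => -80000000
  | 1 => -80000000
  | 2 => -44000000
  | 3 => -16000000
  | 4 => -4200000
  | 5 => -800000
  | 6 => -110000
  | 7 => -10000
  | 8 => -500
  | 10 => 1
  | _ => 0

theorem ramificationCoeff_eq_zero {j : ℕ} (hj : 11 ≤ j) : ramificationCoeff j = 0 := by
  obtain ⟨i, rfl⟩ := Nat.exists_eq_add_of_le' hj
  rfl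

variable (K : Type*) [Field K]

noncomputable def ramificationPoly : K[X] :=
  ∑ j ∈ range 11, C (ramificationCoeff j : K) * X ^ j

variable {K}

theorem coeff_ramificationPoly (n : ℕ) : (ramificationPoly K).coeff n = ramificationCoeff n := by
  simp only [ramificationPoly, finsetSum_coeff, coeff_C_mul_X_pow, sum_ite_eq, mem_range]
  split_ifs with hn
  · rfl
  · rw [ramificationCoeff_eq_zero (not_lt.mp hn), Int.cast_zero]

theorem eval_ramificationPoly (y : K) :
    (ramificationPoly K).eval y = ∑ j ∈ range 11, (ramificationCoeff j : K) * y ^ j := by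
  simp [ramificationPoly, eval_finsetSum]

theorem natDegree_ramificationPoly : (ramificationPoly K).natDegree = 10 := by
  refine natDegree_eq_of_le_of_coeff_ne_zero ?_
    (by simp [coeff_ramificationPoly, ramificationCoeff])
  refine natDegree_sum_le_of_forall_le _ _ fun j hj => (natDegree_C_mul_X_pow_le _ _).trans ?_
  exact Nat.le_of_lt_succ (mem_range.mp hj)

theorem monic_ramificationPoly : (ramificationPoly K).Monic := by
  simp [Monic, leadingCoeff, natDegree_ramificationPoly, coeff_ramificationPoly, ramificationCoeff]

theorem neg_twenty_pow_five_mul_fplus (h20 : (20 : K) ≠ 0) (y : K) :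
    -(20 : K) ^ 5 * fplus (y ^ 2 / 20) y = (ramificationPoly K).eval y := by
  simp only [eval_ramificationPoly, sum_range_succ, sum_range_zero, ramificationCoeff, fplus]
  field_simp
  push_cast
  ring

theorem taylor_coeff_ramificationPoly (y₀ : K) (k : ℕ) :
    (taylor y₀ (ramificationPoly K)).coeff k =
      ∑ n ∈ range 11, (((n + k).choose k * ramificationCoeff (n + k) : ℤ) : K) * y₀ ^ n := by
  have hdeg : (hasseDeriv k (ramificationPoly K)).natDegree < 11 :=
    (natDegree_hasseDeriv_le _ k).trans_lt (by rw [natDegree_ramificationPoly]; omega)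
  rw [taylor_coeff, eval_eq_sum_range' hdeg]
  simp [hasseDeriv_coeff, coeff_ramificationPoly]

/-! Lower bounds for 5-adic valuations, scaled by 10 so that they can be checked by `decide`.
In `taylorCoeff_newton` the term coming from `Y¹⁰` needs `5 ∣ C(10, k)` for `k ≠ 5, 10`. -/

theorem ramificationCoeff_newton :
    ∀ j < 11, ∃ m ≤ 7, (5 : ℤ) ^ m ∣ ramificationCoeff j ∧ 70 ≤ 10 * m + 7 * j := by
  decide

theorem taylorCoeff_newton : ∀ k ≤ 10, 0 < k → ∀ n < 11, ∃ m ≤ 10,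
    (5 : ℤ) ^ m ∣ (n + k).choose k * ramificationCoeff (n + k) ∧
      75 ≤ 10 * m + 7 * n + 8 * k ∧ 70 ≤ 10 * m + 7 * n + 7 * k := by
  decide

theorem taylorCoeff_one_dominant : ∀ n < 11, n ≠ 1 → ∃ m ≤ 10,
    (5 : ℤ) ^ m ∣ (n + 1).choose 1 * ramificationCoeff (n + 1) ∧ 67 < 10 * m + 7 * n := by
  decide

theorem taylorCoeff_five_dominant : ∀ n < 11, n ≠ 5 → ∃ m ≤ 10,
    (5 : ℤ) ^ m ∣ (n + 5).choose 5 * ramificationCoeff (n + 5) ∧ 35 < 10 * m + 7 * n := by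
  decide

variable {v : AbsoluteValue K ℝ}

theorem abv_eq_of_eval_ramificationPoly_eq_zero (hv : IsNonarchimedean v)
    (hQ : ∀ q : ℚ, v (q : K) = (padicNorm 5 q : ℝ)) {y : K}
    (hy : (ramificationPoly K).eval y = 0) : v y = 5 ^ (-(7 / 10 : ℝ)) := by
  rw [eval_ramificationPoly] at hy
  have h := abv_eq_rpow_of_sum_eq_zero (b := 5) (n := 10) (A := 7) hv (by norm_num) (by norm_num)
    ?_ ?_ ?_ hy
  · norm_num at h ⊢
    exact h
  · exact_mod_cast abv_intCast_eq (m := 7) hQ (by decide) (by decide)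
  · simp [ramificationCoeff]
  · intro j hj
    obtain ⟨m, -, hm, hle⟩ := ramificationCoeff_newton j (mem_range.mp hj)
    refine (abv_intCast_le hQ hm).trans ((Real.rpow_le_rpow_left_iff (by norm_num)).mpr ?_)
    have : (70 : ℝ) ≤ 10 * m + 7 * j := by exact_mod_cast hle
    push_cast
    linarith

variable {y₀ : K}

theorem abv_taylor_coeff_ramificationPoly_le (hv : IsNonarchimedean v)
    (hQ : ∀ q : ℚ, v (q : K) = (padicNorm 5 q : ℝ)) (hy₀ : v y₀ = 5 ^ (-(7 / 10 : ℝ))) {k : ℕ}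
    (hk : k ≤ 10) (hk0 : 0 < k) :
    v ((taylor y₀ (ramificationPoly K)).coeff k) ≤
      (5 : ℝ) ^ (-max (15 / 2 - 4 / 5 * (k : ℝ)) (7 - 7 / 10 * k)) := by
  rw [taylor_coeff_ramificationPoly]
  refine abv_sum_intCast_mul_pow_le (p := 5) (d := fun n => n) hv hQ hy₀ fun n hn => ?_
  obtain ⟨m, -, hm, h₁, h₂⟩ := taylorCoeff_newton k hk hk0 n (mem_range.mp hn)
  have h₁' : (75 : ℝ) ≤ 10 * m + 7 * n + 8 * k := by exact_mod_cast h₁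
  have h₂' : (70 : ℝ) ≤ 10 * m + 7 * n + 7 * k := by exact_mod_cast h₂
  exact ⟨m, by exact_mod_cast hm, max_le (by linarith) (by linarith)⟩

theorem abv_derivative_ramificationPoly (hv : IsNonarchimedean v)
    (hQ : ∀ q : ℚ, v (q : K) = (padicNorm 5 q : ℝ)) (hy₀ : v y₀ = 5 ^ (-(7 / 10 : ℝ))) :
    v ((derivative (ramificationPoly K)).eval y₀) = 5 ^ (-(67 / 10 : ℝ)) := by
  rw [← taylor_coeff_one, taylor_coeff_ramificationPoly,
    abv_sum_intCast_mul_pow_eq (p := 5) (d := fun n => n) (m := 6) hv hQ hy₀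
      (mem_range.mpr (by norm_num : 1 < 11)) (by decide) (by decide) fun n hn hn1 => ?_]
  · norm_num
  obtain ⟨m, -, hm, hlt⟩ := taylorCoeff_one_dominant n (mem_range.mp hn) hn1
  have : (67 : ℝ) < 10 * m + 7 * n := by exact_mod_cast hlt
  exact ⟨m, by exact_mod_cast hm, by push_cast; linarith⟩

theorem abv_taylor_coeff_five_ramificationPoly (hv : IsNonarchimedean v)
    (hQ : ∀ q : ℚ, v (q : K) = (padicNorm 5 q : ℝ)) (hy₀ : v y₀ = 5 ^ (-(7 / 10 : ℝ))) :
    v ((taylor y₀ (ramificationPoly K)).coeff 5) = 5 ^ (-(7 / 2 : ℝ)) := by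
  rw [taylor_coeff_ramificationPoly,
    abv_sum_intCast_mul_pow_eq (p := 5) (d := fun n => n) (m := 0) hv hQ hy₀
      (mem_range.mpr (by norm_num : 5 < 11)) (by decide) (by decide) fun n hn hn5 => ?_]
  · norm_num
  obtain ⟨m, -, hm, hlt⟩ := taylorCoeff_five_dominant n (mem_range.mp hn) hn5
  have : (35 : ℝ) < 10 * m + 7 * n := by exact_mod_cast hlt
  exact ⟨m, by exact_mod_cast hm, by push_cast; linarith⟩

theorem eval_add_ne_zero_of_taylor_coeff_dominant (hv : IsNonarchimedean v)
    (hQ : ∀ q : ℚ, v (q : K) = (padicNorm 5 q : ℝ)) (hy₀ : (ramificationPoly K).eval y₀ = 0)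
    {z : K} {σ : ℝ} (hz : v z = 5 ^ (-σ)) {j : ℕ} (hj : j ∈ range 11) {e : ℝ}
    (hbj : v ((taylor y₀ (ramificationPoly K)).coeff j) = 5 ^ (-e))
    (hlt : ∀ k ∈ range 11, k ≠ 0 → k ≠ j →
      e + j * σ < max (15 / 2 - 4 / 5 * (k : ℝ)) (7 - 7 / 10 * k) + k * σ) :
    (ramificationPoly K).eval (z + y₀) ≠ 0 := by
  have hdeg : (taylor y₀ (ramificationPoly K)).natDegree < 11 := by
    rw [natDegree_taylor, natDegree_ramificationPoly]
    norm_num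
  have hbj' := abv_mul_pow_eq_rpow (by norm_num) hbj hz j
  rw [← taylor_eval, eval_eq_sum_range' hdeg]
  refine sum_ne_zero_of_abv_lt hv hj ?_ fun k hk hkj => ?_
  · rw [← v.ne_zero_iff, hbj']
    positivity
  rw [hbj']
  rcases eq_or_ne k 0 with rfl | hk0
  · rw [taylor_coeff_zero, hy₀, zero_mul, map_zero]
    positivity
  have hbk := abv_taylor_coeff_ramificationPoly_le hv hQ
    (abv_eq_of_eval_ramificationPoly_eq_zero hv hQ hy₀) (Nat.lt_succ_iff.mp (mem_range.mp hk))
    (Nat.pos_of_ne_zero hk0)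
  exact (abv_mul_pow_le_rpow (by norm_num) hbk hz k).trans_lt
    ((Real.rpow_lt_rpow_left_iff (by norm_num)).mpr (neg_lt_neg (hlt k hk hk0 hkj)))

theorem abv_sub_of_eval_ramificationPoly_eq_zero (hv : IsNonarchimedean v)
    (hQ : ∀ q : ℚ, v (q : K) = (padicNorm 5 q : ℝ)) {y : K}
    (hy₀ : (ramificationPoly K).eval y₀ = 0) (hy : (ramificationPoly K).eval y = 0)
    (hne : y ≠ y₀) :
    v (y - y₀) = 5 ^ (-(7 / 10 : ℝ)) ∨ v (y - y₀) = 5 ^ (-(8 / 10 : ℝ)) := by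
  have hv₀ := abv_eq_of_eval_ramificationPoly_eq_zero hv hQ hy₀
  obtain ⟨σ, hσ⟩ := exists_abv_eq_rpow (v := v) (b := 5) (by norm_num) (sub_ne_zero.mpr hne)
  have hσ₀ : 7 / 10 ≤ σ := by
    have h : v (y - y₀) ≤ 5 ^ (-(7 / 10 : ℝ)) := by
      rw [sub_eq_add_neg]
      refine (hv _ _).trans ?_
      rw [v.map_neg, hv₀, abv_eq_of_eval_ramificationPoly_eq_zero hv hQ hy, max_self]
    rw [hσ, Real.rpow_le_rpow_left_iff (by norm_num)] at h
    linarith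
  have hroot : (ramificationPoly K).eval (y - y₀ + y₀) = 0 := by rwa [sub_add_cancel]
  by_contra hσ'
  rw [not_or] at hσ'
  rcases lt_or_gt_of_ne (fun h : σ = 8 / 10 => hσ'.2 (by rw [hσ, h])) with hσ₁ | hσ₁
  · have hσ₂ : 7 / 10 < σ := lt_of_le_of_ne hσ₀ fun h => hσ'.1 (by rw [hσ, h])
    refine eval_add_ne_zero_of_taylor_coeff_dominant hv hQ hy₀ hσ (by simp)
      (abv_taylor_coeff_five_ramificationPoly hv hQ hv₀) (fun k _ _ hk5 => ?_) hroot
    rcases lt_or_gt_of_ne hk5 with hk | hk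
    · have hk' : (k : ℝ) < 5 := by exact_mod_cast hk
      have := le_max_left (15 / 2 - 4 / 5 * (k : ℝ)) (7 - 7 / 10 * k)
      push_cast
      nlinarith
    · have hk' : (5 : ℝ) < k := by exact_mod_cast hk
      have := le_max_right (15 / 2 - 4 / 5 * (k : ℝ)) (7 - 7 / 10 * k)
      push_cast
      nlinarith
  · refine eval_add_ne_zero_of_taylor_coeff_dominant hv hQ hy₀ hσ (j := 1) (by simp)
      (by rw [taylor_coeff_one]; exact abv_derivative_ramificationPoly hv hQ hv₀)
      (fun k _ hk0 hk1 => ?_) hroot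
    have hk' : (1 : ℝ) < k := by exact_mod_cast Nat.one_lt_iff_ne_zero_and_ne_one.mpr ⟨hk0, hk1⟩
    have := le_max_left (15 / 2 - 4 / 5 * (k : ℝ)) (7 - 7 / 10 * k)
    push_cast
    nlinarith

theorem nodup_roots_ramificationPoly (hv : IsNonarchimedean v)
    (hQ : ∀ q : ℚ, v (q : K) = (padicNorm 5 q : ℝ)) : (ramificationPoly K).roots.Nodup := by
  classical
  refine Multiset.nodup_iff_count_le_one.mpr fun y => ?_
  rw [count_roots]
  by_contra h
  obtain ⟨hy, hy'⟩ := (one_lt_rootMultiplicity_iff_isRoot monic_ramificationPoly.ne_zero).mp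
    (not_le.mp h)
  have := abv_derivative_ramificationPoly hv hQ (abv_eq_of_eval_ramificationPoly_eq_zero hv hQ hy)
  rw [hy'.eq_zero, map_zero] at this
  exact (Real.rpow_pos_of_pos (by norm_num) _).ne this

variable [IsAlgClosed K]

theorem card_roots_ramificationPoly : Multiset.card (ramificationPoly K).roots = 10 := by
  rw [splits_iff_card_roots.mp (IsAlgClosed.splits _), natDegree_ramificationPoly]

theorem prod_abv_sub_roots_ramificationPoly (hv : IsNonarchimedean v)
    (hQ : ∀ q : ℚ, v (q : K) = (padicNorm 5 q : ℝ)) [DecidableEq K]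
    (hy₀ : y₀ ∈ (ramificationPoly K).roots) :
    ∏ y ∈ (ramificationPoly K).roots.toFinset.erase y₀, v (y - y₀) = 5 ^ (-(67 / 10 : ℝ)) := by
  have hval : ((ramificationPoly K).roots.toFinset.erase y₀).val =
      (ramificationPoly K).roots.erase y₀ := by
    rw [erase_val, Multiset.toFinset_val, (nodup_roots_ramificationPoly hv hQ).dedup]
  have hv₀ := abv_eq_of_eval_ramificationPoly_eq_zero hv hQ
    ((mem_roots monic_ramificationPoly.ne_zero).mp hy₀)
  rw [← abv_derivative_ramificationPoly hv hQ hv₀,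
    (IsAlgClosed.splits _).eval_root_derivative monic_ramificationPoly hy₀, map_multiset_prod,
    Multiset.map_map, prod_eq_multiset_prod, hval]
  simp [v.map_sub]

theorem card_roots_at_distance (hv : IsNonarchimedean v)
    (hQ : ∀ q : ℚ, v (q : K) = (padicNorm 5 q : ℝ)) [DecidableEq K]
    (hy₀ : y₀ ∈ (ramificationPoly K).roots) :
    #{y ∈ (ramificationPoly K).roots.toFinset.erase y₀ | v (y - y₀) = 5 ^ (-(7 / 10 : ℝ))} = 5 ∧
      #{y ∈ (ramificationPoly K).roots.toFinset.erase y₀ | v (y - y₀) = 5 ^ (-(8 / 10 : ℝ))} =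
        4 := by
  have hroot {y : K} (hy : y ∈ (ramificationPoly K).roots) : (ramificationPoly K).eval y = 0 :=
    (mem_roots monic_ramificationPoly.ne_zero).mp hy
  obtain ⟨hsum, hcard⟩ := card_filter_of_prod_eq_rpow (by norm_num) (by norm_num)
    (fun y hy => abv_sub_of_eval_ramificationPoly_eq_zero hv hQ (hroot hy₀)
      (hroot (Multiset.mem_toFinset.mp (mem_of_mem_erase hy))) (ne_of_mem_erase hy))
    (prod_abv_sub_roots_ramificationPoly hv hQ hy₀)
  rw [card_erase_of_mem (Multiset.mem_toFinset.mpr hy₀),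
    Multiset.toFinset_card_of_nodup (nodup_roots_ramificationPoly hv hQ),
    card_roots_ramificationPoly] at hcard
  set A := #{y ∈ (ramificationPoly K).roots.toFinset.erase y₀ | v (y - y₀) = 5 ^ (-(7 / 10 : ℝ))}
  set B := #{y ∈ (ramificationPoly K).roots.toFinset.erase y₀ | v (y - y₀) = 5 ^ (-(8 / 10 : ℝ))}
  have h : 7 * A + 8 * B = 67 := by exact_mod_cast (by linarith : (7 * A + 8 * B : ℝ) = 67)
  omega

end RamificationPoly

theorem setOf_abv_sub_pow_ten_eq {K : Type*} [Field K] [DecidableEq K] (v : AbsoluteValue K ℝ)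
    (F : Finset K) (y₀ : K) (m : ℕ) :
    {y ∈ (F : Set K) | y ≠ y₀ ∧ v (y - y₀) ^ 10 = (5 : ℝ)⁻¹ ^ m} =
      ↑{y ∈ F.erase y₀ | v (y - y₀) = 5 ^ (-(m / 10 : ℝ))} := by
  ext y
  simp only [coe_filter, mem_coe, mem_erase, Set.mem_ofPred_eq,
    pow_eq_inv_pow_iff_eq_rpow (b := 5) (by norm_num) (v.nonneg _) (by norm_num : 10 ≠ 0),
    Nat.cast_ofNat]
  tauto

/-- Over an algebraically closed `K`, the monic degree-10 polynomial
`P(Y) = −20⁵·f⁺(Y²/20, Y)` has 10 distinct roots; for each root `y₀`, exactly 5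
of the other roots `y` satisfy `‖y − y₀‖¹⁰ = 5⁻⁷` and exactly 4 satisfy
`‖y − y₀‖¹⁰ = 5⁻⁸`. -/
theorem ramification_points_two_equidistant_sets {K : Type*} [Field K] [IsAlgClosed K]
    (v : AbsoluteValue K ℝ) (hna : IsNonarchimedean v)
    (hQ : ∀ q : ℚ, v (q : K) = (padicNorm 5 q : ℝ)) :
    ∀ S : Set K, S = {y : K | -(20 : K) ^ 5 * fplus (y ^ 2 / 20) y = 0} →
      S.ncard = 10 ∧
      ∀ y₀ ∈ S,
        {y ∈ S | y ≠ y₀ ∧ v (y - y₀) ^ 10 = (5 : ℝ)⁻¹ ^ 7}.ncard = 5 ∧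
        {y ∈ S | y ≠ y₀ ∧ v (y - y₀) ^ 10 = (5 : ℝ)⁻¹ ^ 8}.ncard = 4 := by
  classical
  rintro S rfl
  have h20 : (20 : K) ≠ 0 := fun h =>
    (zpow_pos (by norm_num : (0 : ℝ) < 5) _).ne (by simpa [h] using hQ 20)
  have hS : {y : K | -(20 : K) ^ 5 * fplus (y ^ 2 / 20) y = 0} =
      (ramificationPoly K).roots.toFinset := by
    ext y
    simp [neg_twenty_pow_five_mul_fplus h20, monic_ramificationPoly.ne_zero]
  rw [hS, Set.ncard_coe_finset, Multiset.toFinset_card_of_nodup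
    (nodup_roots_ramificationPoly hna hQ), card_roots_ramificationPoly]
  refine ⟨rfl, fun y₀ hy₀ => ?_⟩
  rw [setOf_abv_sub_pow_ten_eq, setOf_abv_sub_pow_ten_eq, Set.ncard_coe_finset,
    Set.ncard_coe_finset, Nat.cast_ofNat, Nat.cast_ofNat]
  exact card_roots_at_distance hna hQ (Multiset.mem_toFinset.mp hy₀)
end

section
/- Let r ∈ K satisfy r⁵ + 25r − 25 = 0, and let x, y ∈ K satisfy f⁺(x, y) = 0 and 5^(−3/4) < ‖y‖ < 5^(−1/2). Then ‖x − r‖⁵ = ‖y‖²/5; in particular 5^(−1/2) < ‖x − r‖ < 5^(−2/5). (This is the key estimate showing that the region 1/2 < v₅(y) < 3/4 of X₀(125)⁺ is an annulus on which the curve is well-approximated by x₀⁵ = 15y² with x₀ = x − r.) -/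
/-!
Everything is a dominant-term argument in the ultrametric field. Read as a monic quintic in `x`,
`f⁺(x, y) = 0` has all other coefficients of absolute value `≤ 1/25`, so `‖x‖⁵ ≤ 1/25`; likewise
`‖r‖⁵ ≤ 1/25`. Then in `x⁵ + 25x − 25 = 15y² + (the rest of f⁺)` the term `15y²` dominates, so
`‖x⁵ + 25x − 25‖ = ‖y‖²/5`. Finally, with `e = x − r`, the relation for `r` factors
`x⁵ + 25x − 25 = e·(e⁴ + t)` with `‖t‖ ≤ 1/25`; the lower bound on `‖y‖` forces `‖e‖² > 1/5`, so
`e⁴` dominates and `‖e‖⁵ = ‖y‖²/5`.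
-/

namespace IsNonarchimedean

variable {R : Type*} [CommRing R] {v : AbsoluteValue R ℝ}

theorem apply_add_le_of_le (hna : IsNonarchimedean v) {a b : R} {C : ℝ}
    (ha : v a ≤ C) (hb : v b ≤ C) : v (a + b) ≤ C :=
  (hna a b).trans (max_le ha hb)

theorem apply_sub_le_of_le (hna : IsNonarchimedean v) {a b : R} {C : ℝ}
    (ha : v a ≤ C) (hb : v b ≤ C) : v (a - b) ≤ C := by
  rw [sub_eq_add_neg]
  exact hna.apply_add_le_of_le ha (by rwa [v.map_neg])

theorem apply_add_lt_of_lt (hna : IsNonarchimedean v) {a b : R} {C : ℝ}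
    (ha : v a < C) (hb : v b < C) : v (a + b) < C :=
  (hna a b).trans_lt (max_lt ha hb)

theorem apply_sub_lt_of_lt (hna : IsNonarchimedean v) {a b : R} {C : ℝ}
    (ha : v a < C) (hb : v b < C) : v (a - b) < C := by
  rw [sub_eq_add_neg]
  exact hna.apply_add_lt_of_lt ha (by rwa [v.map_neg])

theorem apply_sum_le_of_le (hna : IsNonarchimedean v) {ι : Type*} {s : Finset ι} {f : ι → R}
    {C : ℝ} (hC : 0 ≤ C) (h : ∀ i ∈ s, v (f i) ≤ C) : v (∑ i ∈ s, f i) ≤ C :=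
  Finset.sum_induction f (fun z ↦ v z ≤ C) (fun _ _ ↦ hna.apply_add_le_of_le) (by simpa using hC) h

theorem apply_pow_le_of_pow_eq_sum [Nontrivial R] (hna : IsNonarchimedean v) {n : ℕ} {C : ℝ}
    (hC : C ≤ 1) {x : R} (c : Fin n → R) (hx : x ^ n = ∑ i, c i * x ^ (i : ℕ))
    (hc : ∀ i, v (c i) ≤ C) : v x ^ n ≤ C := by
  rcases n with _ | n
  · simp at hx
  have hC0 : 0 ≤ C := (v.nonneg _).trans (hc 0)
  by_cases hx1 : v x ≤ 1
  · rw [← map_pow, hx]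
    refine hna.apply_sum_le_of_le hC0 fun i _ ↦ ?_
    rw [map_mul, map_pow]
    exact (mul_le_of_le_one_right (v.nonneg _) (pow_le_one₀ (v.nonneg x) hx1)).trans (hc i)
  · rw [not_le] at hx1
    have hsum : v x ^ (n + 1) ≤ C * v x ^ n := by
      rw [← map_pow, hx]
      refine hna.apply_sum_le_of_le (by positivity) fun i _ ↦ ?_
      rw [map_mul, map_pow]
      exact mul_le_mul (hc i) (pow_le_pow_right₀ hx1.le (Nat.lt_succ_iff.mp i.isLt))
        (by positivity) hC0
    have : v x ^ n < v x ^ (n + 1) := pow_lt_pow_right₀ hx1 n.lt_succ_self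
    nlinarith [pow_pos (zero_lt_one.trans hx1) n]

end IsNonarchimedean

theorem rpow_lt_iff_rpow_mul_lt_pow {b q u : ℝ} (hb : 0 ≤ b) (hu : 0 ≤ u) {n : ℕ} (hn : n ≠ 0) :
    b ^ q < u ↔ b ^ (q * n) < u ^ n := by
  rw [← pow_lt_pow_iff_left₀ (Real.rpow_nonneg hb q) hu hn, Real.rpow_mul_natCast hb]

theorem lt_rpow_iff_pow_lt_rpow_mul {b q u : ℝ} (hb : 0 ≤ b) (hu : 0 ≤ u) {n : ℕ} (hn : n ≠ 0) :
    u < b ^ q ↔ u ^ n < b ^ (q * n) := by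
  rw [← pow_lt_pow_iff_left₀ hu (Real.rpow_nonneg hb q) hn, Real.rpow_mul_natCast hb]

theorem pow_four_lt_of_pow_five_le {a : ℝ} (ha : 0 ≤ a) (h : a ^ 5 ≤ 5⁻¹ ^ 2) : a ^ 4 < 5⁻¹ := by
  by_contra! h4
  have h20 : (5⁻¹ : ℝ) ^ 5 ≤ (5⁻¹ ^ 2) ^ 4 :=
    calc (5⁻¹ : ℝ) ^ 5 ≤ (a ^ 4) ^ 5 := pow_le_pow_left₀ (by norm_num) h4 5
      _ = (a ^ 5) ^ 4 := pow_right_comm a 4 5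
      _ ≤ (5⁻¹ ^ 2) ^ 4 := pow_le_pow_left₀ (by positivity) h 4
  norm_num at h20

section

variable {K : Type*} [Field K] {v : AbsoluteValue K ℝ}

theorem abv_five_eq (hQ : ∀ q : ℚ, v (q : K) = (padicNorm 5 q : ℝ)) : v 5 = 5⁻¹ := by
  have h := hQ (5 : ℕ)
  rw [padicNorm.padicNorm_p (by norm_num)] at h
  simpa using h

theorem abv_natCast_eq_one_of_not_dvd (hQ : ∀ q : ℚ, v (q : K) = (padicNorm 5 q : ℝ))
    {n : ℕ} (hn : ¬5 ∣ n) : v n = 1 := by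
  have : Fact (Nat.Prime 5) := ⟨by norm_num⟩
  simpa [(padicNorm.nat_eq_one_iff n).2 hn] using hQ n

theorem abv_pow_five_le_of_quintic_eq_zero (hna : IsNonarchimedean v) (h25 : v 25 = 5⁻¹ ^ 2) {r : K}
    (hr : r ^ 5 + 25 * r - 25 = 0) : v r ^ 5 ≤ 5⁻¹ ^ 2 := by
  refine hna.apply_pow_le_of_pow_eq_sum (by norm_num) ![25, -25, 0, 0, 0] ?_ ?_
  · simp [Fin.sum_univ_five]
    linear_combination hr
  · intro i
    fin_cases i <;> simp [h25]

theorem abv_pow_five_le_of_fplus (hna : IsNonarchimedean v) (h5 : v 5 = 5⁻¹)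
    (h15 : v 15 = 5⁻¹) (h25 : v 25 = 5⁻¹ ^ 2) {x y : K} (hf : fplus x y = 0)
    (hy : v y ^ 2 < 5⁻¹) : v x ^ 5 ≤ 5⁻¹ ^ 2 := by
  have hy1 : v y < 1 := by nlinarith [v.nonneg y]
  refine hna.apply_pow_le_of_pow_eq_sum (by norm_num)
    ![y ^ 4 + 5 * y ^ 3 + 15 * y ^ 2 + 25 * y + 25, 5 * y ^ 3 + 5 * y ^ 2 - 25,
      15 * y ^ 2 + 25, 25 * y - 25, 25] ?_ ?_
  · simp [Fin.sum_univ_five]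
    unfold fplus at hf
    linear_combination -hf
  · intro i
    fin_cases i <;> dsimp <;>
      repeat (first | apply hna.apply_add_le_of_le | apply hna.apply_sub_le_of_le)
    all_goals simp only [map_mul, map_pow, h5, h15, h25]
    all_goals nlinarith [v.nonneg y]

theorem abv_quintic_eq_of_fplus (hna : IsNonarchimedean v) (h5 : v 5 = 5⁻¹)
    (h15 : v 15 = 5⁻¹) (h25 : v 25 = 5⁻¹ ^ 2) {x y : K} (hf : fplus x y = 0)
    (hx : v x ^ 4 < 5⁻¹) (hy₁ : 125⁻¹ < v y ^ 4) (hy₂ : v y ^ 2 < 5⁻¹) :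
    v (x ^ 5 + 25 * x - 25) = 5⁻¹ * v y ^ 2 := by
  have hx0 := v.nonneg x
  have hy0 := v.nonneg y
  have hx1 : v x < 1 := (pow_lt_one_iff_of_nonneg hx0 four_ne_zero).1 (hx.trans (by norm_num))
  have hy1 : v y < 1 := by nlinarith
  have hy5 : 1 < 5 * v y := by nlinarith
  have hxy : v x ^ 2 < 5 * v y ^ 2 := by
    rw [← pow_lt_pow_iff_left₀ (by positivity) (by positivity) two_ne_zero]
    nlinarith
  have hsplit : x ^ 5 + 25 * x - 25 = 15 * y ^ 2 + (y ^ 4 + 5 * x * y ^ 3 + 15 * x ^ 2 * y ^ 2 +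
      25 * x ^ 3 * y + 5 * y ^ 3 + 5 * x * y ^ 2 + 25 * y + 25 * x ^ 4 - 25 * x ^ 3 +
      25 * x ^ 2) := by
    unfold fplus at hf
    linear_combination -hf
  have h15y : v (15 * y ^ 2) = 5⁻¹ * v y ^ 2 := by rw [map_mul, map_pow, h15]
  rw [hsplit]
  refine (hna.add_eq_left_of_lt ?_).trans h15y
  rw [h15y]
  repeat (first | apply hna.apply_add_lt_of_lt | apply hna.apply_sub_lt_of_lt)
  all_goals simp only [map_mul, map_pow, h5, h15, h25]
  all_goals nlinarith [mul_le_mul_of_nonneg_right (pow_le_one₀ (n := 3) hx0 hx1.le) hy0]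

theorem abv_sub_pow_five_eq_abv_quintic (hna : IsNonarchimedean v) (h5 : v 5 = 5⁻¹)
    (h10 : v 10 = 5⁻¹) (h25 : v 25 = 5⁻¹ ^ 2) {r x : K} (hr : r ^ 5 + 25 * r - 25 = 0)
    (hr4 : v r ^ 4 < 5⁻¹) (hx4 : v x ^ 4 < 5⁻¹) (hs : 5⁻¹ ^ 5 < v (x ^ 5 + 25 * x - 25) ^ 2) :
    v (x - r) ^ 5 = v (x ^ 5 + 25 * x - 25) := by
  have hM : max (v x) (v r) ^ 4 < 5⁻¹ := by
    rcases max_choice (v x) (v r) with h | h <;> rw [h] <;> assumption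
  set e := x - r
  have hrM : v r ≤ max (v x) (v r) := le_max_right _ _
  have heM : v e ≤ max (v x) (v r) := hna.apply_sub_le_of_le (le_max_left _ _) hrM
  set tail := 5 * r * e ^ 3 + 10 * r ^ 2 * e ^ 2 + 10 * r ^ 3 * e + 5 * r ^ 4 + 25
  have hfac : x ^ 5 + 25 * x - 25 = e * (e ^ 4 + tail) := by linear_combination hr
  have htail : v tail ≤ 5⁻¹ ^ 2 := by
    have hr0 := v.nonneg r
    have he0 := v.nonneg e
    have hmono (i j : ℕ) : v r ^ i * v e ^ j ≤ max (v x) (v r) ^ i * max (v x) (v r) ^ j :=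
      mul_le_mul (pow_le_pow_left₀ hr0 hrM i) (pow_le_pow_left₀ he0 heM j) (by positivity)
        (by positivity)
    repeat apply hna.apply_add_le_of_le
    all_goals simp only [map_mul, map_pow, h5, h10, h25]
    all_goals nlinarith [hmono 1 3, hmono 2 2, hmono 3 1, hmono 4 0]
  rw [hfac, map_mul] at hs ⊢
  have he2 : 5⁻¹ < v e ^ 2 := by
    by_contra! he2
    have hq : v (e ^ 4 + tail) ≤ 5⁻¹ ^ 2 :=
      hna.apply_add_le_of_le (by rw [map_pow]; nlinarith) htail
    have : (v e * v (e ^ 4 + tail)) ^ 2 ≤ 5⁻¹ * (5⁻¹ ^ 2) ^ 2 := by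
      rw [mul_pow]
      exact mul_le_mul he2 (pow_le_pow_left₀ (v.nonneg _) hq 2) (by positivity) (by norm_num)
    linarith
  rw [hna.add_eq_left_of_lt (by rw [map_pow]; nlinarith), map_pow]
  ring

end

/-- On the region `1/2 < v₅(y) < 3/4` of `X₀(125)⁺`, with `r` a root of
`X⁵ + 25X − 25`, one has `‖x − r‖⁵ = ‖y‖²/5`; in particular
`5^(−1/2) < ‖x − r‖ < 5^(−2/5)`. -/
theorem annulus_key_estimate {K : Type*} [Field K]
    (v : AbsoluteValue K ℝ) (hna : IsNonarchimedean v)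
    (hQ : ∀ q : ℚ, v (q : K) = (padicNorm 5 q : ℝ))
    (r x y : K) (hr : r ^ 5 + 25 * r - 25 = 0) (hf : fplus x y = 0)
    (hy₁ : (5 : ℝ) ^ (-(3 / 4) : ℝ) < v y) (hy₂ : v y < (5 : ℝ) ^ (-(1 / 2) : ℝ)) :
    v (x - r) ^ 5 = v y ^ 2 / 5 ∧
      (5 : ℝ) ^ (-(1 / 2) : ℝ) < v (x - r) ∧ v (x - r) < (5 : ℝ) ^ (-(2 / 5) : ℝ) := by
  have h5 := abv_five_eq hQ
  have h2 : v 2 = 1 := by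
    exact_mod_cast abv_natCast_eq_one_of_not_dvd hQ (n := 2) (by norm_num)
  have h3 : v 3 = 1 := by
    exact_mod_cast abv_natCast_eq_one_of_not_dvd hQ (n := 3) (by norm_num)
  have h10 : v 10 = 5⁻¹ := by rw [show (10 : K) = 2 * 5 by norm_num, map_mul, h2, h5, one_mul]
  have h15 : v 15 = 5⁻¹ := by rw [show (15 : K) = 3 * 5 by norm_num, map_mul, h3, h5, one_mul]
  have h25 : v 25 = 5⁻¹ ^ 2 := by rw [show (25 : K) = 5 ^ 2 by norm_num, map_pow, h5]
  rw [rpow_lt_iff_rpow_mul_lt_pow (by norm_num) (v.nonneg y) four_ne_zero] at hy₁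
  rw [lt_rpow_iff_pow_lt_rpow_mul (by norm_num) (v.nonneg y) two_ne_zero] at hy₂
  norm_num at hy₁ hy₂
  have hx4 := pow_four_lt_of_pow_five_le (v.nonneg x)
    (abv_pow_five_le_of_fplus hna h5 h15 h25 hf (by linarith))
  have hr4 := pow_four_lt_of_pow_five_le (v.nonneg r)
    (abv_pow_five_le_of_quintic_eq_zero hna h25 hr)
  have hS := abv_quintic_eq_of_fplus hna h5 h15 h25 hf hx4 (by linarith) (by linarith)
  have he := abv_sub_pow_five_eq_abv_quintic hna h5 h10 h25 hr hr4 hx4 (by rw [hS]; nlinarith)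
  refine ⟨by rw [he, hS]; ring, ?_, ?_⟩
  · rw [rpow_lt_iff_rpow_mul_lt_pow (by norm_num) (v.nonneg _) (n := 10) (by norm_num)]
    norm_num
    nlinarith
  · rw [lt_rpow_iff_pow_lt_rpow_mul (by norm_num) (v.nonneg _) (n := 5) (by norm_num)]
    norm_num
    nlinarith
end
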